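/- Let a, b, c, d be points of ℝ³ such that {a, b, c} is linearly independent and b and d lie strictly on opposite sides of the plane through 0, a, c (the affine span of {0, a, c}). Then d and the origin 0 lie strictly on the same side of the affine span of {a, b, c} if and only if b and 0 lie strictly on the same side of the affine span of {a, c, d}. (This symmetry of admissibility for an edge flip across the edge ac of the quadrilateral with vertices a, b, c, d on the light-cone is used in the proof of the paper's Theorem that the algorithm terminates in finitely many iterations: the vertices b̃ and d̃ contribute to the heights of the faces ãc̃d̃ and ãb̃c̃ before the edge flip.) -/

import Mathlib

/-!
Let `f` be the linear form equal to `1` at `a, b, c`, and `φ` the one vanishing at `a, c` with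
`φ b = 1`. Then the face `abc` is `{f = 1}`, the plane `0ac` is `{φ = 0}`, and `φ d < 0`. Every
other plane through the edge `ac` is a level set `{f + t • φ = 1}`; the face `acd` is the one with
`t = (1 - f d) / φ d`, and `b` lies below it iff `1 + t < 1`. As `φ d < 0`, this holds iff
`f d < 1`, i.e. iff `d` lies below `abc`.
-/

open Module AffineSubspace

theorem SameRay.mul_nonneg {k : Type*} [CommRing k] [LinearOrder k] [IsStrictOrderedRing k]
    {x y : k} (h : SameRay k x y) : 0 ≤ x * y := by
  rcases h with rfl | rfl | ⟨r₁, r₂, hr₁, hr₂, h⟩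
  · simp
  · simp
  · rw [smul_eq_mul, smul_eq_mul] at h
    have : r₁ * (x * y) = r₂ * (y * y) := by rw [← mul_assoc, h]; ring
    exact (mul_nonneg_iff_of_pos_left hr₁).1 (this ▸ _root_.mul_nonneg hr₂.le (mul_self_nonneg y))

theorem LinearIndependent.exists_linearMap_apply_eq {k E ι : Type*} [DivisionRing k]
    [AddCommGroup E] [Module k E] {v : ι → E} (hv : LinearIndependent k v) (w : ι → k) :
    ∃ f : E →ₗ[k] k, ∀ i, f (v i) = w i := by
  obtain ⟨f, hf⟩ := LinearMap.exists_extend ((Finsupp.linearCombination k w).comp hv.repr)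
  refine ⟨f, fun i => ?_⟩
  have hvi : v i ∈ Submodule.span k (Set.range v) := Submodule.subset_span ⟨i, rfl⟩
  simpa [hv.repr_eq_single i ⟨v i, hvi⟩ rfl] using LinearMap.congr_fun hf ⟨v i, hvi⟩

namespace AffineSubspace

variable {k E : Type*} [Field k] [AddCommGroup E] [Module k E] {g : E →ₗ[k] k} {p x y : E}

theorem mem_mk'_ker_iff : x ∈ mk' p (LinearMap.ker g) ↔ g x = g p := by
  rw [mem_mk', LinearMap.mem_ker, vsub_eq_sub, map_sub, sub_eq_zero]

theorem _root_.AffineIndependent.affineSpan_eq_mk'_ker [FiniteDimensional k E] {ι : Type*}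
    [Fintype ι] {q : ι → E} (hq : AffineIndependent k q) (hcard : Fintype.card ι = finrank k E)
    (hg : g ≠ 0) (i : ι) (hgq : ∀ j, g (q j) = g (q i)) :
    affineSpan k (Set.range q) = mk' (q i) (LinearMap.ker g) := by
  refine hq.affineSpan_eq_of_le_of_card_eq_finrank_add_one ?_ ?_
  · exact affineSpan_le.2 (Set.range_subset_iff.2 fun j => mem_mk'_ker_iff.2 (hgq j))
  · rw [direction_mk', hcard, Module.Dual.finrank_ker_add_one_of_ne_zero hg]

variable [LinearOrder k] [IsStrictOrderedRing k]

theorem exists_mem_mk'_ker_sameRay_iff {v : E} (hv : g v ≠ 0) :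
    (∃ q ∈ mk' p (LinearMap.ker g), SameRay k v (y - q)) ↔ 0 ≤ g v * (g y - g p) := by
  constructor
  · rintro ⟨q, hq, hray⟩
    simpa [mem_mk'_ker_iff.1 hq] using (hray.map g).mul_nonneg
  · intro h
    have ht : 0 ≤ (g y - g p) / g v := by
      rw [← mul_div_mul_left _ _ hv]
      exact div_nonneg h (mul_self_nonneg _)
    refine ⟨y - ((g y - g p) / g v) • v, mem_mk'_ker_iff.2 ?_, ?_⟩
    · rw [map_sub, map_smul, smul_eq_mul, div_mul_cancel₀ _ hv, sub_sub_cancel]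
    · rw [sub_sub_cancel]
      exact SameRay.sameRay_nonneg_smul_right v ht

theorem sSameSide_mk'_ker_iff :
    (mk' p (LinearMap.ker g)).SSameSide x y ↔ 0 < (g x - g p) * (g y - g p) := by
  rw [sSameSide_iff_exists_left (self_mem_mk' p _), mem_mk'_ker_iff, mem_mk'_ker_iff]
  by_cases hx : g x = g p
  · simp [hx]
  by_cases hy : g y = g p
  · simp [hy]
  have hx' : g (x - p) ≠ 0 := by rwa [map_sub, sub_ne_zero]
  simp_rw [vsub_eq_sub]
  rw [exists_mem_mk'_ker_sameRay_iff hx', map_sub, lt_iff_le_and_ne, ne_comm,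
    mul_ne_zero_iff, sub_ne_zero, sub_ne_zero]
  tauto

theorem sOppSide_mk'_ker_iff :
    (mk' p (LinearMap.ker g)).SOppSide x y ↔ (g x - g p) * (g y - g p) < 0 := by
  rw [sOppSide_iff_exists_left (self_mem_mk' p _), mem_mk'_ker_iff, mem_mk'_ker_iff]
  by_cases hx : g x = g p
  · simp [hx]
  by_cases hy : g y = g p
  · simp [hy]
  have hx' : g (p - x) ≠ 0 := by rw [map_sub, sub_ne_zero]; exact Ne.symm hx
  simp_rw [vsub_eq_sub, ← sameRay_neg_iff (x := x - p), neg_sub]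
  rw [exists_mem_mk'_ker_sameRay_iff hx', map_sub, lt_iff_le_and_ne, ← neg_nonneg, ← neg_mul,
    neg_sub, mul_ne_zero_iff, sub_ne_zero, sub_ne_zero]
  tauto

end AffineSubspace

section Plane

variable {k E : Type*} [Field k] [AddCommGroup E] [Module k E] [FiniteDimensional k E]

theorem affineSpan_triple_eq_mk'_ker (hE : finrank k E = 3) {g : E →ₗ[k] k} {p q r : E}
    (hpqr : AffineIndependent k ![p, q, r]) (hq : g q = g p) (hr : g r = g p) (hg : g ≠ 0) :
    affineSpan k {p, q, r} = mk' p (LinearMap.ker g) := by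
  have hrange : Set.range ![p, q, r] = {p, q, r} := by
    rw [Matrix.range_cons, Matrix.range_cons_cons_empty]; rfl
  rw [← hrange]
  refine hpqr.affineSpan_eq_mk'_ker (by simp [hE]) hg 0 ?_
  simp [Fin.forall_fin_succ, hq, hr]

theorem affineSpan_triple_eq_mk'_ker_add_smul (hE : finrank k E = 3) {f φ : E →ₗ[k] k} {a c d : E}
    (hacd : AffineIndependent k ![a, c, d]) (hfa : f a = 1) (hfc : f c = 1) (hφa : φ a = 0)
    (hφc : φ c = 0) (hφd : φ d ≠ 0) :
    affineSpan k {a, c, d} = mk' a (LinearMap.ker (f + ((1 - f d) / φ d) • φ)) := by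
  refine affineSpan_triple_eq_mk'_ker hE hacd ?_ ?_ fun h => ?_
  · simp [hfa, hfc, hφa, hφc]
  · simp [hfa, hφa, hφd]
  · simpa [hfa, hφa] using LinearMap.congr_fun h a

end Plane

/-- Symmetry of admissibility of an edge flip: if `{a, b, c}` is linearly
independent and `b`, `d` lie strictly on opposite sides of the plane through
`0, a, c`, then `d` lies below the face `abc` iff `b` lies below the face
`acd`. -/
theorem flip_admissible_symm (a b c d : Fin 3 → ℝ)
    (habc : LinearIndependent ℝ ![a, b, c])
    (hbd : (affineSpan ℝ {(0 : Fin 3 → ℝ), a, c}).SOppSide b d) :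
    ((affineSpan ℝ {a, b, c}).SSameSide d 0 ↔
      (affineSpan ℝ {a, c, d}).SSameSide b 0) := by
  obtain ⟨f, hfa, hfb, hfc⟩ : ∃ f : (Fin 3 → ℝ) →ₗ[ℝ] ℝ, f a = 1 ∧ f b = 1 ∧ f c = 1 := by
    obtain ⟨f, hf⟩ := habc.exists_linearMap_apply_eq ![1, 1, 1]
    exact ⟨f, hf 0, hf 1, hf 2⟩
  obtain ⟨φ, hφa, hφb, hφc⟩ : ∃ φ : (Fin 3 → ℝ) →ₗ[ℝ] ℝ, φ a = 0 ∧ φ b = 1 ∧ φ c = 0 := by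
    obtain ⟨φ, hφ⟩ := habc.exists_linearMap_apply_eq ![0, 1, 0]
    exact ⟨φ, hφ 0, hφ 1, hφ 2⟩
  have hE : finrank ℝ (Fin 3 → ℝ) = 3 := by simp
  have hac : a ≠ c := habc.injective.ne (by decide : (0 : Fin 3) ≠ 2)
  have hABC : affineSpan ℝ {a, b, c} = mk' a (LinearMap.ker f) :=
    affineSpan_triple_eq_mk'_ker hE habc.affineIndependent (hfb.trans hfa.symm)
      (hfc.trans hfa.symm) (fun h => by simp [h] at hfa)
  have h0ABC : (0 : Fin 3 → ℝ) ∉ affineSpan ℝ {a, b, c} := by simp [hABC, hfa]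
  have hP : affineSpan ℝ {(0 : Fin 3 → ℝ), a, c} = mk' 0 (LinearMap.ker φ) :=
    affineSpan_triple_eq_mk'_ker hE
      (affineIndependent_of_ne_of_notMem_of_mem_of_mem hac h0ABC
        (mem_affineSpan ℝ (by simp)) (mem_affineSpan ℝ (by simp)))
      (by simp [hφa]) (by simp [hφc]) (fun h => by simp [h] at hφb)
  have hφd : φ d < 0 := by
    simpa [hφb] using sOppSide_mk'_ker_iff.1 (hP ▸ hbd : (mk' 0 (LinearMap.ker φ)).SOppSide b d)
  have hACD := affineSpan_triple_eq_mk'_ker_add_smul hE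
    (affineIndependent_of_ne_of_mem_of_mem_of_notMem hac (mem_affineSpan ℝ (by simp))
      (mem_affineSpan ℝ (by simp)) hbd.right_notMem) hfa hfc hφa hφc hφd.ne
  rw [hABC, hACD, sSameSide_mk'_ker_iff, sSameSide_mk'_ker_iff]
  simp [hfa, hfb, hφa, hφb, div_lt_iff_of_neg hφd]
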